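/- arXiv:1603.09285 — 2 statements merged into one kernel-verified Lean document; each statement's English description precedes it below -/
import Mathlib

section
/- The two-focus ellipse with foci i and 2i and distance-sum log(5/2) coincides with a focus/directrix ellipse: {z ∈ ℍ : dist z i + dist z (2i) = log(5/2)} = {z ∈ ℍ : sinh(dist z i) = (√209/21)·sinh(Metric.infDist z ℓ_{√(11/19)})}, and both sets equal the algebraic curve {z = x + iy ∈ ℍ : 20x⁴ + 40x²y² + 325x² + 20y⁴ − 116y² + 80 = 0}. -/
open UpperHalfPlane

/-- The geodesic `ℓ_R = {u ∈ ℍ : |u| = R}` in the upper half-plane. -/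
noncomputable def ell (R : ℝ) : Set ℍ := {u : ℍ | ‖(u : ℂ)‖ = R}

/-- The point `t·i` of the upper half-plane, for `t > 0`. -/
noncomputable def vpt (t : ℝ) (ht : 0 < t) : ℍ :=
  UpperHalfPlane.mk (t * Complex.I) (by simpa using ht)

/-!
Everything is reduced to coordinates `z = x + iy`, `ρ = x² + y²`. For the foci,
`cosh d(z, ti) = (ρ + t²)/(2ty)`. For `u = a + iv ∈ ℓ_R` one has
`cosh d(z, u) = (ρ + R² - 2xa)/(2yv)`, and Cauchy–Schwarz for `(2Rx, S)·(a, v)` with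
`S² = (ρ + R²)² - 4R²x²` bounds it below by `S/(2Ry)`, with equality at the foot of the
perpendicular; hence `sinh d(z, ℓ_R) = |ρ - R²|/(2Ry)`.

With these formulas the focus/directrix condition is `21 √((ρ+1)² - 4y²) = |19ρ - 11|`, which
squares to the quartic `Q = 20ρ² + 325ρ + 80 - 441y² = 0`. The two-focus condition is
`cosh (d₁ + d₂) = 29/20`, i.e. `√P = T` with `P - T² = (4/25) y² Q`; squaring is reversible because
`T = (209/20) x² + (4/5) ρ ≥ 0` on the quartic.
-/

open Real Metric

lemma Real.sinh_eq_sqrt_of_cosh_eq_div {x a d : ℝ} (hx : 0 ≤ x) (hd : 0 < d)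
    (h : cosh x = a / d) : sinh x = √(a ^ 2 - d ^ 2) / d := by
  rw [← arcosh_cosh hx, sinh_arcosh (one_le_cosh x), h, div_pow,
    div_sub_one (pow_ne_zero 2 hd.ne'), sqrt_div' _ (sq_nonneg d), sqrt_sq hd.le]

lemma sq_two_mul_im_mul_le (z : ℍ) (t : ℝ) :
    (2 * z.im * t) ^ 2 ≤ (z.re ^ 2 + z.im ^ 2 + t ^ 2) ^ 2 := by
  rw [← sub_nonneg, show (z.re ^ 2 + z.im ^ 2 + t ^ 2) ^ 2 - (2 * z.im * t) ^ 2 =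
    (z.re ^ 2 + (z.im - t) ^ 2) * (z.re ^ 2 + (z.im + t) ^ 2) by ring]
  positivity

lemma sq_two_mul_mul_re_lt (R : ℝ) (z : ℍ) :
    (2 * R * z.re) ^ 2 < (z.re ^ 2 + z.im ^ 2 + R ^ 2) ^ 2 := by
  have := z.im_pos
  rw [← sub_pos, show (z.re ^ 2 + z.im ^ 2 + R ^ 2) ^ 2 - (2 * R * z.re) ^ 2 =
    ((z.re - R) ^ 2 + z.im ^ 2) * ((z.re + R) ^ 2 + z.im ^ 2) by ring]
  positivity

lemma vpt_re (t : ℝ) (ht : 0 < t) : (vpt t ht).re = 0 := by simp [vpt]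

lemma vpt_im (t : ℝ) (ht : 0 < t) : (vpt t ht).im = t := by simp [vpt]

lemma I_eq_vpt_one : UpperHalfPlane.I = vpt 1 one_pos := by
  ext1
  simp [vpt]

lemma cosh_dist_vpt (z : ℍ) (t : ℝ) (ht : 0 < t) :
    cosh (dist z (vpt t ht)) = (z.re ^ 2 + z.im ^ 2 + t ^ 2) / (2 * z.im * t) := by
  rw [cosh_dist', vpt_re, vpt_im]
  ring

lemma sinh_dist_vpt (z : ℍ) (t : ℝ) (ht : 0 < t) : sinh (dist z (vpt t ht)) =
    √((z.re ^ 2 + z.im ^ 2 + t ^ 2) ^ 2 - (2 * z.im * t) ^ 2) / (2 * z.im * t) :=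
  sinh_eq_sqrt_of_cosh_eq_div dist_nonneg (by have := z.im_pos; positivity)
    (cosh_dist_vpt z t ht)

lemma re_sq_add_im_sq_of_mem_ell {R : ℝ} {u : ℍ} (hu : u ∈ ell R) :
    u.re ^ 2 + u.im ^ 2 = R ^ 2 := by
  have h : ‖(u : ℂ)‖ ^ 2 = R ^ 2 := by rw [show ‖(u : ℂ)‖ = R from hu]
  rw [Complex.sq_norm, Complex.normSq_apply, coe_re, coe_im] at h
  linear_combination h

lemma cosh_dist_of_mem_ell {R : ℝ} (z : ℍ) {u : ℍ} (hu : u ∈ ell R) :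
    cosh (dist z u) = (z.re ^ 2 + z.im ^ 2 + R ^ 2 - 2 * z.re * u.re) / (2 * z.im * u.im) := by
  rw [cosh_dist', ← re_sq_add_im_sq_of_mem_ell hu]
  ring

lemma le_cosh_dist_of_mem_ell {R : ℝ} (hR : 0 < R) (z : ℍ) {u : ℍ} (hu : u ∈ ell R) :
    √((z.re ^ 2 + z.im ^ 2 + R ^ 2) ^ 2 - (2 * R * z.re) ^ 2) / (2 * R * z.im) ≤
      cosh (dist z u) := by
  have hy := z.im_pos
  have hv := u.im_pos
  set A := z.re ^ 2 + z.im ^ 2 + R ^ 2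
  set S := √(A ^ 2 - (2 * R * z.re) ^ 2)
  have hS : S ^ 2 = A ^ 2 - (2 * R * z.re) ^ 2 :=
    sq_sqrt (sub_nonneg.2 (sq_two_mul_mul_re_lt R z).le)
  have hu2 := re_sq_add_im_sq_of_mem_ell hu
  -- Cauchy–Schwarz: `(2Rx, S)` has length `A` and `(u.re, u.im)` has length `R`
  have hCS : (2 * R * z.re * u.re + S * u.im) ^ 2 ≤ (A * R) ^ 2 := by
    nlinarith [sq_nonneg (2 * R * z.re * u.im - S * u.re)]
  have hCS' : 2 * R * z.re * u.re + S * u.im ≤ A * R :=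
    (le_abs_self _).trans (abs_le_of_sq_le_sq hCS (by positivity))
  rw [cosh_dist_of_mem_ell z hu, div_le_div_iff₀ (by positivity) (by positivity)]
  nlinarith [mul_le_mul_of_nonneg_left hCS' (by positivity : 0 ≤ 2 * z.im)]

lemma exists_mem_ell_cosh_dist_eq {R : ℝ} (hR : 0 < R) (z : ℍ) : ∃ u ∈ ell R,
    cosh (dist z u) =
      √((z.re ^ 2 + z.im ^ 2 + R ^ 2) ^ 2 - (2 * R * z.re) ^ 2) / (2 * R * z.im) := by
  have hy := z.im_pos
  set A := z.re ^ 2 + z.im ^ 2 + R ^ 2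
  set S := √(A ^ 2 - (2 * R * z.re) ^ 2)
  have hS : S ^ 2 = A ^ 2 - (2 * R * z.re) ^ 2 :=
    sq_sqrt (sub_nonneg.2 (sq_two_mul_mul_re_lt R z).le)
  have hSpos : 0 < S := sqrt_pos.2 (sub_pos.2 (sq_two_mul_mul_re_lt R z))
  have hA : 0 < A := by positivity
  -- the equality case of the Cauchy–Schwarz inequality in `le_cosh_dist_of_mem_ell`
  let u : ℍ := ⟨⟨2 * R ^ 2 * z.re / A, R * S / A⟩, by positivity⟩
  have hure : u.re = 2 * R ^ 2 * z.re / A := rfl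
  have huim : u.im = R * S / A := rfl
  have hu : u ∈ ell R := by
    show ‖(u : ℂ)‖ = R
    rw [← sq_eq_sq₀ (norm_nonneg _) hR.le, Complex.sq_norm, Complex.normSq_apply, coe_re, coe_im,
      hure, huim]
    field_simp
    linear_combination hS
  refine ⟨u, hu, ?_⟩
  rw [cosh_dist_of_mem_ell z hu, hure, huim]
  field_simp
  rw [hS]
  ring

lemma cosh_infDist_ell {R : ℝ} (hR : 0 < R) (z : ℍ) : cosh (infDist z (ell R)) =
    √((z.re ^ 2 + z.im ^ 2 + R ^ 2) ^ 2 - (2 * R * z.re) ^ 2) / (2 * R * z.im) := by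
  obtain ⟨u, hu, hcosh⟩ := exists_mem_ell_cosh_dist_eq hR z
  have hinf : infDist z (ell R) = dist z u := by
    refine le_antisymm (infDist_le_dist_of_mem hu) ((le_infDist ⟨u, hu⟩).2 fun w hw ↦ ?_)
    rw [← abs_of_nonneg dist_nonneg, ← abs_of_nonneg (dist_nonneg (x := z) (y := w)),
      ← cosh_le_cosh, hcosh]
    exact le_cosh_dist_of_mem_ell hR z hw
  rw [hinf, hcosh]

lemma sinh_infDist_ell {R : ℝ} (hR : 0 < R) (z : ℍ) :
    sinh (infDist z (ell R)) = |z.re ^ 2 + z.im ^ 2 - R ^ 2| / (2 * R * z.im) := by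
  have hy := z.im_pos
  rw [sinh_eq_sqrt_of_cosh_eq_div infDist_nonneg (by positivity) (cosh_infDist_ell hR z),
    sq_sqrt (sub_nonneg.2 (sq_two_mul_mul_re_lt R z).le), ← sqrt_sq_eq_abs]
  ring_nf

lemma sinh_dist_I_eq_iff (z : ℍ) :
    sinh (dist z UpperHalfPlane.I) = (√209 / 21) * sinh (infDist z (ell √(11 / 19))) ↔
      20 * z.re ^ 4 + 40 * z.re ^ 2 * z.im ^ 2 + 325 * z.re ^ 2 + 20 * z.im ^ 4
        - 116 * z.im ^ 2 + 80 = 0 := by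
  have hy := z.im_pos
  set r := √(11 / 19)
  have hr : 0 < r := by positivity
  have hr2 : r ^ 2 = 11 / 19 := sq_sqrt (by norm_num)
  have h209 : √209 = 19 * r := by
    rw [show (209 : ℝ) = 19 ^ 2 * (11 / 19) by norm_num, sqrt_mul (by positivity),
      sqrt_sq (by norm_num)]
  set ρ := z.re ^ 2 + z.im ^ 2
  have hrhs : √209 / 21 * (|ρ - r ^ 2| / (2 * r * z.im)) =
      |19 * ρ - 11| / 21 / (2 * z.im * 1) := by
    rw [h209, hr2, show 19 * ρ - 11 = 19 * (ρ - 11 / 19) by ring, abs_mul,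
      abs_of_pos (by norm_num : (0 : ℝ) < 19)]
    field_simp
  rw [I_eq_vpt_one, sinh_dist_vpt, sinh_infDist_ell hr, hrhs, div_left_inj' (by positivity),
    sqrt_eq_iff_eq_sq (sub_nonneg.2 (sq_two_mul_im_mul_le z 1)) (by positivity), div_pow, sq_abs]
  constructor <;> intro h
  · linear_combination (441 / 4) * h
  · linear_combination (4 / 441) * h

lemma dist_I_add_dist_two_I_eq_iff (z : ℍ) :
    dist z UpperHalfPlane.I + dist z (vpt 2 (by norm_num)) = log (5 / 2) ↔
      20 * z.re ^ 4 + 40 * z.re ^ 2 * z.im ^ 2 + 325 * z.re ^ 2 + 20 * z.im ^ 4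
        - 116 * z.im ^ 2 + 80 = 0 := by
  have hy := z.im_pos
  have hlog : cosh (log (5 / 2)) = 29 / 20 := by
    rw [cosh_log (by norm_num)]
    norm_num
  rw [← cosh_injOn.eq_iff (add_nonneg dist_nonneg dist_nonneg) (log_nonneg (by norm_num)),
    hlog, cosh_add, I_eq_vpt_one, cosh_dist_vpt, cosh_dist_vpt, sinh_dist_vpt, sinh_dist_vpt,
    div_mul_div_comm, div_mul_div_comm, ← sqrt_mul (sub_nonneg.2 (sq_two_mul_im_mul_le z 1)),
    ← add_div, div_eq_iff (by positivity), ← eq_sub_iff_add_eq']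
  simp only [one_pow, mul_one]
  set ρ := z.re ^ 2 + z.im ^ 2
  set P := ((ρ + 1) ^ 2 - (2 * z.im) ^ 2) * ((ρ + 2 ^ 2) ^ 2 - (2 * z.im * 2) ^ 2)
  set T := 29 / 20 * (2 * z.im * (2 * z.im * 2)) - (ρ + 1) * (ρ + 2 ^ 2)
  have hP : 0 ≤ P := mul_nonneg (sub_nonneg.2 (by simpa using sq_two_mul_im_mul_le z 1))
    (sub_nonneg.2 (sq_two_mul_im_mul_le z 2))
  have key : P - T ^ 2 = 4 / 25 * z.im ^ 2 * (20 * z.re ^ 4 + 40 * z.re ^ 2 * z.im ^ 2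
      + 325 * z.re ^ 2 + 20 * z.im ^ 4 - 116 * z.im ^ 2 + 80) := by ring
  constructor
  · intro h
    have hT : 0 ≤ T := h ▸ sqrt_nonneg P
    rw [sqrt_eq_iff_eq_sq hP hT, ← sub_eq_zero, key] at h
    exact (mul_eq_zero.1 h).resolve_left (by positivity)
  · intro h
    have hT : T = 209 / 20 * z.re ^ 2 + 4 / 5 * ρ := by linear_combination (-1 / 20) * h
    replace hT : 0 ≤ T := hT ▸ by positivity
    rw [sqrt_eq_iff_eq_sq hP hT, ← sub_eq_zero, key, h, mul_zero]

/-- The two-focus ellipse with foci `i`, `2i` and distance-sum `log(5/2)` equals the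
focus/directrix ellipse with `ε = √209/21`, `r = √(11/19)`, and both equal the quartic
curve `20x⁴ + 40x²y² + 325x² + 20y⁴ − 116y² + 80 = 0`. -/
theorem stmt11 :
    {z : ℍ | dist z UpperHalfPlane.I + dist z (vpt 2 (by norm_num)) = Real.log (5 / 2)} =
      {z : ℍ | Real.sinh (dist z UpperHalfPlane.I) =
        (Real.sqrt 209 / 21) * Real.sinh (Metric.infDist z (ell (Real.sqrt (11 / 19))))} ∧
    {z : ℍ | Real.sinh (dist z UpperHalfPlane.I) =
        (Real.sqrt 209 / 21) * Real.sinh (Metric.infDist z (ell (Real.sqrt (11 / 19))))} =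
      {z : ℍ | 20 * z.re ^ 4 + 40 * z.re ^ 2 * z.im ^ 2 + 325 * z.re ^ 2 + 20 * z.im ^ 4
        - 116 * z.im ^ 2 + 80 = 0} :=
  ⟨Set.ext fun z ↦ (dist_I_add_dist_two_I_eq_iff z).trans (sinh_dist_I_eq_iff z).symm,
    Set.ext sinh_dist_I_eq_iff⟩
end

section
/- For every r > 0 with r ≠ 1 and every C > 0, the focus/directrix parabola never agrees with a two-focus parabola: {z ∈ ℍ : dist z i = Metric.infDist z ℓ_r} ≠ {z = x + iy ∈ ℍ : (x² + y² + 1 + √((x² − y² + 1)² + 4x²y²))·(x² + y²) = C·y²}, where the right-hand set is the two-focus parabola with focus i and parameter C. -/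
/-
For `u` on `ℓ_r` one has `2 y v cosh d(z, u) = |z|² + r² - 2 x a` (`u = a + v i`), so by
Cauchy–Schwarz `2 r y cosh d(z, ℓ_r) = √(4 r² y² + (|z|² - r²)²)`, attained at an explicit foot
point. Since `2 y cosh d(z, i) = |z|² + 1`, the focus/directrix parabola is the quartic
`r² (|z|² + 1)² = 4 r² y² + (|z|² - r²)²`. It contains `i √r`, which pins `C = 2 max 1 r`.
For `r < 1` the two-focus parabola then contains `i`, which is not on the focus/directrix
parabola; for `r > 1` an explicit point of the focus/directrix parabola violates the squared
equation of the two-focus parabola.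
-/

open UpperHalfPlane

open Real Metric

theorem mem_ell_iff {r : ℝ} (hr : 0 ≤ r) {u : ℍ} : u ∈ ell r ↔ u.re ^ 2 + u.im ^ 2 = r ^ 2 := by
  rw [ell, Set.mem_ofPred_eq, ← sq_eq_sq₀ (norm_nonneg _) hr, Complex.sq_norm,
    Complex.normSq_apply, coe_re, coe_im]
  ring_nf

theorem im_mul_cosh_dist_of_mem_ell {r : ℝ} (hr : 0 ≤ r) (z : ℍ) {u : ℍ} (hu : u ∈ ell r) :
    2 * z.im * u.im * cosh (dist z u) = z.re ^ 2 + z.im ^ 2 + r ^ 2 - 2 * z.re * u.re := by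
  rw [cosh_dist', mul_div_cancel₀ _ (by have := z.im_pos; have := u.im_pos; positivity)]
  linear_combination (mem_ell_iff hr).1 hu

theorem sqrt_le_im_mul_cosh_dist_of_mem_ell {r : ℝ} (hr : 0 < r) (z : ℍ) {u : ℍ}
    (hu : u ∈ ell r) :
    √(4 * r ^ 2 * z.im ^ 2 + (z.re ^ 2 + z.im ^ 2 - r ^ 2) ^ 2) ≤
      2 * r * z.im * cosh (dist z u) := by
  set m := √(4 * r ^ 2 * z.im ^ 2 + (z.re ^ 2 + z.im ^ 2 - r ^ 2) ^ 2)
  have hm : m ^ 2 = (z.re ^ 2 + z.im ^ 2 + r ^ 2) ^ 2 - (2 * z.re * r) ^ 2 := by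
    rw [sq_sqrt (by positivity)]; ring
  have hu' := (mem_ell_iff hr.le).1 hu
  have hcosh := im_mul_cosh_dist_of_mem_ell hr.le z hu
  -- Cauchy–Schwarz for `(2 x r, m)` and `(u.re, u.im)`, of lengths `|z|² + r²` and `r`
  have hcs : 2 * z.re * r * u.re + m * u.im ≤ r * (z.re ^ 2 + z.im ^ 2 + r ^ 2) := by
    refine abs_le_of_sq_le_sq' ?_ (by positivity) |>.2
    nlinarith [sq_nonneg (2 * z.re * r * u.im - m * u.re)]
  refine le_of_mul_le_mul_right ?_ u.im_pos
  linear_combination hcs - r * hcosh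

theorem exists_mem_ell_im_mul_cosh_dist_eq {r : ℝ} (hr : 0 < r) (z : ℍ) : ∃ w ∈ ell r,
    2 * r * z.im * cosh (dist z w) =
      √(4 * r ^ 2 * z.im ^ 2 + (z.re ^ 2 + z.im ^ 2 - r ^ 2) ^ 2) := by
  set m := √(4 * r ^ 2 * z.im ^ 2 + (z.re ^ 2 + z.im ^ 2 - r ^ 2) ^ 2)
  have hm0 : 0 < m := sqrt_pos.2 (by have := z.im_pos; positivity)
  have hm : m ^ 2 = (z.re ^ 2 + z.im ^ 2 + r ^ 2) ^ 2 - (2 * z.re * r) ^ 2 := by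
    rw [sq_sqrt (by positivity)]; ring
  set K := z.re ^ 2 + z.im ^ 2 + r ^ 2
  have hK : 0 < K := by positivity
  -- the equality case of the Cauchy–Schwarz step in `sqrt_le_im_mul_cosh_dist_of_mem_ell`
  let w : ℍ := ⟨⟨2 * z.re * r ^ 2 / K, r * m / K⟩, by positivity⟩
  have hw : w ∈ ell r := by
    rw [mem_ell_iff hr.le]
    change (2 * z.re * r ^ 2 / K) ^ 2 + (r * m / K) ^ 2 = r ^ 2
    field_simp
    linear_combination hm
  refine ⟨w, hw, ?_⟩
  have hcosh := im_mul_cosh_dist_of_mem_ell hr.le z hw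
  change 2 * z.im * (r * m / K) * cosh (dist z w) = K - 2 * z.re * (2 * z.re * r ^ 2 / K) at hcosh
  field_simp at hcosh
  refine mul_left_cancel₀ hm0.ne' ?_
  linear_combination hcosh - hm

theorem im_mul_cosh_infDist_ell {r : ℝ} (hr : 0 < r) (z : ℍ) :
    2 * r * z.im * cosh (infDist z (ell r)) =
      √(4 * r ^ 2 * z.im ^ 2 + (z.re ^ 2 + z.im ^ 2 - r ^ 2) ^ 2) := by
  obtain ⟨w, hw, hcosh⟩ := exists_mem_ell_im_mul_cosh_dist_eq hr z
  suffices infDist z (ell r) = dist z w by rw [this, hcosh]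
  refine le_antisymm (infDist_le_dist_of_mem hw) (le_infDist ⟨w, hw⟩ |>.2 fun u hu ↦ ?_)
  have hle : cosh (dist z w) ≤ cosh (dist z u) := by
    have := sqrt_le_im_mul_cosh_dist_of_mem_ell hr z hu
    rw [← hcosh] at this
    exact le_of_mul_le_mul_left this (by have := z.im_pos; positivity)
  rwa [cosh_le_cosh, abs_of_nonneg dist_nonneg, abs_of_nonneg dist_nonneg] at hle

theorem dist_I_eq_infDist_ell_iff {r : ℝ} (hr : 0 < r) (z : ℍ) :
    dist z UpperHalfPlane.I = infDist z (ell r) ↔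
      r ^ 2 * (z.re ^ 2 + z.im ^ 2 + 1) ^ 2 =
        4 * r ^ 2 * z.im ^ 2 + (z.re ^ 2 + z.im ^ 2 - r ^ 2) ^ 2 := by
  have hcoshI :
      2 * r * z.im * cosh (dist z UpperHalfPlane.I) = r * (z.re ^ 2 + z.im ^ 2 + 1) := by
    rw [cosh_dist', I_re, I_im]
    field_simp [z.im_pos.ne']
    ring
  have hpos : 0 < 2 * r * z.im := by have := z.im_pos; positivity
  rw [← cosh_injOn.eq_iff dist_nonneg infDist_nonneg, ← mul_right_inj' hpos.ne', hcoshI,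
    im_mul_cosh_infDist_ell hr, eq_comm, sqrt_eq_iff_eq_sq (by positivity) (by positivity),
    eq_comm, mul_pow]

theorem dist_I_ne_infDist_ell_I {r : ℝ} (hr : 0 < r) (hr1 : r ≠ 1) :
    dist UpperHalfPlane.I UpperHalfPlane.I ≠ infDist UpperHalfPlane.I (ell r) := by
  rw [Ne, dist_I_eq_infDist_ell_iff hr, I_re, I_im]
  intro h
  have : (r - 1) ^ 2 * (r + 1) ^ 2 = 0 := by linear_combination -h
  exact hr1 (by nlinarith [sq_nonneg (r - 1), sq_nonneg (r + 1)])

theorem exists_re_sq_im_sq {a b : ℝ} (ha : 0 ≤ a) (hb : 0 < b) :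
    ∃ z : ℍ, z.re ^ 2 = a ∧ z.im ^ 2 = b :=
  ⟨⟨⟨√a, √b⟩, sqrt_pos.2 hb⟩, sq_sqrt ha, sq_sqrt hb.le⟩

theorem two_focus_parabola_quartic {x y C : ℝ} (hy : y ≠ 0)
    (h : (x ^ 2 + y ^ 2 + 1 + √((x ^ 2 - y ^ 2 + 1) ^ 2 + 4 * x ^ 2 * y ^ 2)) * (x ^ 2 + y ^ 2) =
      C * y ^ 2) :
    C ^ 2 * y ^ 2 + 4 * (x ^ 2 + y ^ 2) ^ 2 = 2 * C * (x ^ 2 + y ^ 2) * (x ^ 2 + y ^ 2 + 1) := by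
  set D := √((x ^ 2 - y ^ 2 + 1) ^ 2 + 4 * x ^ 2 * y ^ 2)
  have hD : D ^ 2 = (x ^ 2 + y ^ 2 + 1) ^ 2 - 4 * y ^ 2 := by
    rw [sq_sqrt (by positivity)]; ring
  -- square `D * s = C y² - s (s + 1)`, where `s = x² + y²`
  refine mul_left_cancel₀ (pow_ne_zero 2 hy) ?_
  linear_combination (x ^ 2 + y ^ 2) ^ 2 * hD
    - (C * y ^ 2 - (x ^ 2 + y ^ 2) * (x ^ 2 + y ^ 2 + 1) + D * (x ^ 2 + y ^ 2)) * h

theorem exists_dist_I_eq_infDist_ell_not_quartic {r : ℝ} (hr : 1 < r) :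
    ∃ z : ℍ, dist z UpperHalfPlane.I = infDist z (ell r) ∧
      (2 * r) ^ 2 * z.im ^ 2 + 4 * (z.re ^ 2 + z.im ^ 2) ^ 2 ≠
        2 * (2 * r) * (z.re ^ 2 + z.im ^ 2) * (z.re ^ 2 + z.im ^ 2 + 1) := by
  have hr0 : 0 < r := by linarith
  -- the point of the focus/directrix parabola with `|z|² = r² / (r + 1)`
  obtain ⟨z, hx, hy⟩ := exists_re_sq_im_sq (a := (2 * r ^ 2 - r - 1) / (4 * (r + 1)))
    (b := (2 * r ^ 2 + r + 1) / (4 * (r + 1))) (by apply div_nonneg <;> nlinarith) (by positivity)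
  refine ⟨z, (dist_I_eq_infDist_ell_iff hr0 z).2 ?_, ?_⟩
  · rw [hx, hy]
    field_simp
    ring
  · have hdiff : (2 * r) ^ 2 * z.im ^ 2 + 4 * (z.re ^ 2 + z.im ^ 2) ^ 2 -
        2 * (2 * r) * (z.re ^ 2 + z.im ^ 2) * (z.re ^ 2 + z.im ^ 2 + 1) =
        -(r ^ 2 * (r - 1) * (2 * r ^ 2 - r + 1)) / (r + 1) ^ 2 := by
      rw [hx, hy]
      field_simp
      ring
    refine (sub_neg.1 ?_).ne
    rw [hdiff]
    exact div_neg_of_neg_of_pos (neg_neg_of_pos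
      (mul_pos (mul_pos (by positivity) (sub_pos.2 hr)) (by nlinarith))) (by positivity)

theorem stmt15_general (r C : ℝ) (hr : 0 < r) (hr1 : r ≠ 1) :
    {z : ℍ | dist z UpperHalfPlane.I = Metric.infDist z (ell r)} ≠
      {z : ℍ | (z.re ^ 2 + z.im ^ 2 + 1 +
          Real.sqrt ((z.re ^ 2 - z.im ^ 2 + 1) ^ 2 + 4 * z.re ^ 2 * z.im ^ 2)) *
          (z.re ^ 2 + z.im ^ 2) = C * z.im ^ 2} := by
  intro hset
  obtain ⟨z₁, hx₁, hy₁⟩ := exists_re_sq_im_sq le_rfl hr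
  have h₁ := (Set.ext_iff.1 hset z₁).1
    ((dist_I_eq_infDist_ell_iff hr z₁).2 (by rw [hx₁, hy₁]; ring))
  rw [Set.mem_ofPred_eq, hx₁, hy₁,
    show (0 - r + 1) ^ 2 + 4 * 0 * r = (1 - r) ^ 2 by ring, sqrt_sq_eq_abs] at h₁
  have hC : C = r + 1 + |1 - r| := mul_right_cancel₀ hr.ne' (by linear_combination -h₁)
  rcases hr1.lt_or_gt with hlt | hgt
  · obtain rfl : C = 2 := by rw [hC, abs_of_pos (sub_pos.2 hlt)]; ring
    refine dist_I_ne_infDist_ell_I hr hr1 ((Set.ext_iff.1 hset _).2 ?_)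
    rw [Set.mem_ofPred_eq, I_re, I_im]
    norm_num
  · obtain rfl : C = 2 * r := by rw [hC, abs_of_neg (sub_neg.2 hgt)]; ring
    obtain ⟨z, hz, hquartic⟩ := exists_dist_I_eq_infDist_ell_not_quartic hgt
    exact hquartic (two_focus_parabola_quartic z.im_pos.ne' ((Set.ext_iff.1 hset z).1 hz))

/-- A focus/directrix parabola never coincides with a two-focus parabola. -/
theorem stmt15 (r C : ℝ) (hr : 0 < r) (hr1 : r ≠ 1) (hC : 0 < C) :
    {z : ℍ | dist z UpperHalfPlane.I = Metric.infDist z (ell r)} ≠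
      {z : ℍ | (z.re ^ 2 + z.im ^ 2 + 1 +
          Real.sqrt ((z.re ^ 2 - z.im ^ 2 + 1) ^ 2 + 4 * z.re ^ 2 * z.im ^ 2)) *
          (z.re ^ 2 + z.im ^ 2) = C * z.im ^ 2} :=
  stmt15_general r C hr hr1
end
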